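/- arXiv:2407.14740 — 2 statements merged into one kernel-verified Lean document; each statement's English description precedes it below -/
import Mathlib

section
/- The function f(ν) = ln(2^(e^(ν/w)) − 1) is convex on ν > 0 for any fixed weight w > 0. -/
theorem convexOn_log_two_rpow_exp_sub_one (w : ℝ) (hw : 0 < w) :
    ConvexOn ℝ (Set.Ioi (0 : ℝ))
      (fun ν : ℝ => Real.log ((2 : ℝ) ^ (Real.exp (ν / w)) - 1)) := by
  have h2 : (0:ℝ) < 2 := by norm_num
  have hrw : (fun ν : ℝ => Real.log ((2 : ℝ) ^ (Real.exp (ν / w)) - 1)) =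
      fun ν : ℝ => Real.log (Real.exp (Real.log 2 * Real.exp (ν / w)) - 1) := by
    funext ν
    rw [Real.rpow_def_of_pos h2]
  rw [hrw]
  set c := Real.log 2 with hc
  have hcpos : 0 < c := Real.log_pos (by norm_num)
  -- abbreviations
  set X : ℝ → ℝ := fun x => c * Real.exp (x / w) with hX
  set G : ℝ → ℝ := fun x => Real.exp (X x) with hG
  have hXpos : ∀ x, 0 < X x := fun x => mul_pos hcpos (Real.exp_pos _)
  have hG1 : ∀ x, 1 < G x := fun x => by
    simpa using Real.exp_lt_exp.2 (hXpos x) |>.trans_le' (by simp)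
  have hGne : ∀ x, G x - 1 ≠ 0 := fun x => sub_ne_zero.2 (hG1 x).ne'
  have hXd : ∀ x, HasDerivAt X (X x / w) x := by
    intro x
    have h1 : HasDerivAt (fun x : ℝ => x / w) (1 / w) x := (hasDerivAt_id x).div_const w
    have h2' : HasDerivAt (fun x : ℝ => Real.exp (x / w)) (Real.exp (x / w) * (1 / w)) x :=
      h1.exp
    have := h2'.const_mul c
    convert this using 1
    show c * Real.exp (x / w) / w = _
    ring
    all_goals rfl
  have hGd : ∀ x, HasDerivAt G (G x * (X x / w)) x := fun x => (hXd x).exp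
  -- first derivative
  have hfd : ∀ x, HasDerivAt (fun ν : ℝ => Real.log (Real.exp (X ν) - 1))
      (X x * G x / (G x - 1) / w) x := by
    intro x
    have hM : HasDerivAt (fun ν : ℝ => G ν - 1) (G x * (X x / w)) x :=
      (hGd x).sub_const 1
    have := hM.log (hGne x)
    convert this using 1
    field_simp
  -- second derivative
  have hf2 : ∀ x, HasDerivAt (fun ν : ℝ => X ν * G ν / (G ν - 1) / w)
      ((((X x / w) * G x + X x * (G x * (X x / w))) * (G x - 1)
        - X x * G x * (G x * (X x / w))) / (G x - 1) ^ 2 / w) x := by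
    intro x
    have hN : HasDerivAt (fun ν : ℝ => X ν * G ν)
        ((X x / w) * G x + X x * (G x * (X x / w))) x := (hXd x).mul (hGd x)
    have hM : HasDerivAt (fun ν : ℝ => G ν - 1) (G x * (X x / w)) x :=
      (hGd x).sub_const 1
    exact (hN.div hM (hGne x)).div_const w
  refine convexOn_of_hasDerivWithinAt2_nonneg (convex_Ioi 0)
      (f' := fun x => X x * G x / (G x - 1) / w)
      (f'' := fun x => (((X x / w) * G x + X x * (G x * (X x / w))) * (G x - 1)
        - X x * G x * (G x * (X x / w))) / (G x - 1) ^ 2 / w)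
      (fun x _ => (hfd x).continuousAt.continuousWithinAt)
      (fun x _ => (hfd x).hasDerivWithinAt)
      (fun x _ => (hf2 x).hasDerivWithinAt) ?_
  intro x _
  have key : ((X x / w) * G x + X x * (G x * (X x / w))) * (G x - 1)
      - X x * G x * (G x * (X x / w)) = (X x / w) * G x * (G x - 1 - X x) := by ring
  rw [key]
  have hGX : X x + 1 ≤ G x := by
    have := Real.add_one_le_exp (X x)
    simpa [hG] using this
  have h1 : 0 ≤ G x - 1 - X x := by linarith
  have h2' : (0:ℝ) < (G x - 1) ^ 2 := pow_pos (sub_pos.2 (hG1 x)) 2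
  have h3 : 0 ≤ (X x / w) * G x * (G x - 1 - X x) :=
    mul_nonneg (mul_nonneg (div_nonneg (hXpos x).le hw.le) (Real.exp_pos _).le) h1
  exact div_nonneg (div_nonneg h3 h2'.le) hw.le
end

section
/- Under the substitution p_n = e^{y_n}, the constraint ln((∑_{n'∈S} e^{y_{n'}} g_{n'} + N₀)/(e^{y_n} g_n)) + ln(2^{e^{ν_n/w_n}} − 1) ≤ 0 defines a convex set in the variables (y, ν), provided g_n > 0, g_{n'} > 0, N₀ > 0, w_n > 0. -/
open Real Set Finset

/-- Hölder inequality with weights θ, σ summing to 1. -/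
lemma holder_theta {ι : Type*} (s : Finset ι) (a b : ι → ℝ)
    (ha : ∀ i ∈ s, 0 ≤ a i) (hb : ∀ i ∈ s, 0 ≤ b i) {θ σ : ℝ}
    (hθ : 0 < θ) (hσ : 0 < σ) (hθσ : θ + σ = 1) :
    ∑ i ∈ s, a i ^ θ * b i ^ σ ≤ (∑ i ∈ s, a i) ^ θ * (∑ i ∈ s, b i) ^ σ := by
  have hpq : Real.HolderConjugate (1/θ) (1/σ) := by
    refine ⟨?_, by positivity, by positivity⟩
    rw [one_div, inv_inv, one_div, inv_inv, inv_one]; exact hθσ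
  have H := Real.inner_le_Lp_mul_Lq_of_nonneg s hpq
      (f := fun i => a i ^ θ) (g := fun i => b i ^ σ)
      (fun i hi => Real.rpow_nonneg (ha i hi) _)
      (fun i hi => Real.rpow_nonneg (hb i hi) _)
  have e1 : ∑ i ∈ s, (a i ^ θ) ^ (1/θ) = ∑ i ∈ s, a i :=
    Finset.sum_congr rfl fun i hi => by
      rw [← Real.rpow_mul (ha i hi), mul_one_div_cancel hθ.ne', Real.rpow_one]
  have e2 : ∑ i ∈ s, (b i ^ σ) ^ (1/σ) = ∑ i ∈ s, b i :=
    Finset.sum_congr rfl fun i hi => by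
      rw [← Real.rpow_mul (hb i hi), mul_one_div_cancel hσ.ne', Real.rpow_one]
  rw [e1, e2, one_div_one_div, one_div_one_div] at H
  exact H

/-- Two-point Hölder inequality. -/
lemma holder_two {x₁ x₂ y₁ y₂ θ σ : ℝ} (hx₁ : 0 ≤ x₁) (hx₂ : 0 ≤ x₂)
    (hy₁ : 0 ≤ y₁) (hy₂ : 0 ≤ y₂) (hθ : 0 < θ) (hσ : 0 < σ) (hθσ : θ + σ = 1) :
    x₁ ^ θ * y₁ ^ σ + x₂ ^ θ * y₂ ^ σ ≤ (x₁ + x₂) ^ θ * (y₁ + y₂) ^ σ := by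
  have := holder_theta (Finset.univ : Finset (Fin 2)) ![x₁, x₂] ![y₁, y₂]
    (by intro i _; fin_cases i <;> simpa) (by intro i _; fin_cases i <;> simpa) hθ hσ hθσ
  simpa [Fin.sum_univ_two] using this

/-- Convexity of the log-sum-exp type function with a positive additive constant. -/
lemma convexOn_logsumexp {ι : Type*} (S : Finset ι) (c : ι → ℝ) (hc : ∀ i, 0 < c i)
    (N₀ : ℝ) (hN₀ : 0 < N₀) :
    ConvexOn ℝ Set.univ (fun y : ι → ℝ => Real.log (∑ i ∈ S, Real.exp (y i) * c i + N₀)) := by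
  have Apos : ∀ u : ι → ℝ, 0 < ∑ i ∈ S, Real.exp (u i) * c i + N₀ := fun u =>
    add_pos_of_nonneg_of_pos
      (Finset.sum_nonneg fun i _ => mul_nonneg (Real.exp_pos _).le (hc i).le) hN₀
  refine ⟨convex_univ, fun y _ z _ θ σ hθ hσ hθσ => ?_⟩
  rcases hθ.eq_or_lt with h0 | hθ
  · have : σ = 1 := by linarith
    simp [← h0, this]
  rcases hσ.eq_or_lt with h0 | hσ
  · have : θ = 1 := by linarith
    simp [← h0, this]
  have key : ∑ i ∈ S, Real.exp ((θ • y + σ • z) i) * c i + N₀ ≤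
      (∑ i ∈ S, Real.exp (y i) * c i + N₀) ^ θ * (∑ i ∈ S, Real.exp (z i) * c i + N₀) ^ σ := by
    have step1 : ∑ i ∈ S, Real.exp ((θ • y + σ • z) i) * c i =
        ∑ i ∈ S, (Real.exp (y i) * c i) ^ θ * (Real.exp (z i) * c i) ^ σ := by
      refine Finset.sum_congr rfl fun i _ => ?_
      have hc1 : c i ^ θ * c i ^ σ = c i := by
        rw [← Real.rpow_add (hc i), hθσ, Real.rpow_one]
      have hpt : (θ • y + σ • z) i = y i * θ + z i * σ := by
        simp [mul_comm]
      rw [Real.mul_rpow (Real.exp_pos _).le (hc i).le,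
          Real.mul_rpow (Real.exp_pos _).le (hc i).le,
          ← Real.exp_mul, ← Real.exp_mul, hpt, Real.exp_add]
      conv_lhs => rw [← hc1]
      ring
    calc ∑ i ∈ S, Real.exp ((θ • y + σ • z) i) * c i + N₀
        ≤ (∑ i ∈ S, Real.exp (y i) * c i) ^ θ * (∑ i ∈ S, Real.exp (z i) * c i) ^ σ
            + N₀ ^ θ * N₀ ^ σ := by
          rw [step1]
          gcongr ?_ + ?_
          · exact holder_theta S _ _ (fun i _ => mul_nonneg (Real.exp_pos _).le (hc i).le)
              (fun i _ => mul_nonneg (Real.exp_pos _).le (hc i).le) hθ hσ hθσ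
          · rw [← Real.rpow_add hN₀, hθσ, Real.rpow_one]
      _ ≤ _ := holder_two (Finset.sum_nonneg fun i _ => mul_nonneg (Real.exp_pos _).le (hc i).le)
            hN₀.le (Finset.sum_nonneg fun i _ => mul_nonneg (Real.exp_pos _).le (hc i).le)
            hN₀.le hθ hσ hθσ
  calc Real.log (∑ i ∈ S, Real.exp ((θ • y + σ • z) i) * c i + N₀)
      ≤ Real.log ((∑ i ∈ S, Real.exp (y i) * c i + N₀) ^ θ *
          (∑ i ∈ S, Real.exp (z i) * c i + N₀) ^ σ) :=
        Real.log_le_log (Apos _) key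
    _ = θ • Real.log (∑ i ∈ S, Real.exp (y i) * c i + N₀) +
          σ • Real.log (∑ i ∈ S, Real.exp (z i) * c i + N₀) := by
        rw [Real.log_mul (Real.rpow_pos_of_pos (Apos y) _).ne'
            (Real.rpow_pos_of_pos (Apos z) _).ne',
          Real.log_rpow (Apos y), Real.log_rpow (Apos z), smul_eq_mul, smul_eq_mul]

private lemma one_lt_E (x : ℝ) : 1 < Real.exp (Real.log 2 * Real.exp x) := by
  have h : 0 < Real.log 2 * Real.exp x :=
    mul_pos (Real.log_pos one_lt_two) (Real.exp_pos x)
  simpa using Real.exp_lt_exp.mpr h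

private lemma h0_hasDeriv (x : ℝ) :
    HasDerivAt (fun x => Real.log (Real.exp (Real.log 2 * Real.exp x) - 1))
      ((Real.exp (Real.log 2 * Real.exp x) - 1)⁻¹ *
        (Real.exp (Real.log 2 * Real.exp x) * (Real.log 2 * Real.exp x))) x := by
  have h2 : HasDerivAt (fun x => Real.log 2 * Real.exp x) (Real.log 2 * Real.exp x) x :=
    (Real.hasDerivAt_exp x).const_mul (Real.log 2)
  have h3 : HasDerivAt (fun x => Real.exp (Real.log 2 * Real.exp x))
      (Real.exp (Real.log 2 * Real.exp x) * (Real.log 2 * Real.exp x)) x :=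
    (Real.hasDerivAt_exp _).comp x h2
  have h4 := h3.sub_const 1
  have hne : Real.exp (Real.log 2 * Real.exp x) - 1 ≠ 0 :=
    (sub_pos.mpr (one_lt_E x)).ne'
  exact (Real.hasDerivAt_log hne).comp x h4

private lemma phi_anti : AntitoneOn (fun s => (1 - Real.exp (-s)) / s) (Ioi (0:ℝ)) := by
  have hd : ∀ s ∈ interior (Ioi (0:ℝ)),
      HasDerivWithinAt (fun s => (1 - Real.exp (-s)) / s)
        ((Real.exp (-s) * s - (1 - Real.exp (-s)) * 1) / s ^ 2) (interior (Ioi (0:ℝ))) s := by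
    intro s hs
    rw [interior_Ioi] at hs
    have hu : HasDerivAt (fun s : ℝ => 1 - Real.exp (-s)) (Real.exp (-s)) s := by
      have : HasDerivAt (fun s : ℝ => Real.exp (-s)) (Real.exp (-s) * (-1)) s :=
        (Real.hasDerivAt_exp _).comp s (hasDerivAt_neg s)
      simpa using this.const_sub 1
    exact ((hu.div (hasDerivAt_id s) (ne_of_gt hs))).hasDerivWithinAt
  refine antitoneOn_of_hasDerivWithinAt_nonpos (convex_Ioi 0) ?_ hd ?_
  · intro s hs
    exact ContinuousAt.continuousWithinAt <|
      ((continuous_const.sub (Real.continuous_exp.comp continuous_neg)).continuousAt).div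
        continuousAt_id (ne_of_gt hs)
  · intro s hs
    rw [interior_Ioi] at hs
    apply div_nonpos_of_nonpos_of_nonneg _ (sq_nonneg s)
    have h1 := Real.add_one_le_exp s
    have h2 : Real.exp (-s) * Real.exp s = 1 := by
      rw [← Real.exp_add]; simp
    nlinarith [Real.exp_pos s, Real.exp_pos (-s)]

private lemma psi_mono {s t : ℝ} (hs : 0 < s) (hst : s ≤ t) :
    (Real.exp s - 1)⁻¹ * (Real.exp s * s) ≤ (Real.exp t - 1)⁻¹ * (Real.exp t * t) := by
  have ht : 0 < t := lt_of_lt_of_le hs hst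
  have hes : 1 < Real.exp s := by simpa using Real.exp_lt_exp.mpr hs
  have het : 1 < Real.exp t := by simpa using Real.exp_lt_exp.mpr ht
  have key : (1 - Real.exp (-t)) / t ≤ (1 - Real.exp (-s)) / s :=
    phi_anti hs (lt_of_lt_of_le hs hst : (0:ℝ) < t) hst
  have key2 : (1 - Real.exp (-t)) * s ≤ (1 - Real.exp (-s)) * t :=
    (div_le_div_iff₀ ht hs).mp key
  rw [inv_mul_eq_div, inv_mul_eq_div, div_le_div_iff₀ (sub_pos.mpr hes) (sub_pos.mpr het)]
  have h2s : Real.exp (-s) * Real.exp s = 1 := by rw [← Real.exp_add]; simp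
  have h2t : Real.exp (-t) * Real.exp t = 1 := by rw [← Real.exp_add]; simp
  have h3 := mul_le_mul_of_nonneg_right key2
    (mul_pos (Real.exp_pos s) (Real.exp_pos t)).le
  have e2 : Real.exp (-t) * Real.exp t * (s * Real.exp s) = s * Real.exp s := by
    rw [h2t]; ring
  have e3 : Real.exp (-s) * Real.exp s * (t * Real.exp t) = t * Real.exp t := by
    rw [h2s]; ring
  nlinarith [h3, e2, e3]

/-- Convexity of `x ↦ log (2 ^ (exp x) - 1)` (written via `exp (log 2 * exp x)`). -/
lemma convexOn_h0 :
    ConvexOn ℝ Set.univ (fun x => Real.log (Real.exp (Real.log 2 * Real.exp x) - 1)) := by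
  apply Monotone.convexOn_univ_of_deriv
  · exact fun x => (h0_hasDeriv x).differentiableAt
  · have hderiv : deriv (fun x => Real.log (Real.exp (Real.log 2 * Real.exp x) - 1)) =
        fun x => (Real.exp (Real.log 2 * Real.exp x) - 1)⁻¹ *
          (Real.exp (Real.log 2 * Real.exp x) * (Real.log 2 * Real.exp x)) :=
      funext fun x => (h0_hasDeriv x).deriv
    rw [hderiv]
    intro x y hxy
    exact psi_mono (mul_pos (Real.log_pos one_lt_two) (Real.exp_pos x))
      (mul_le_mul_of_nonneg_left (Real.exp_le_exp.mpr hxy) (Real.log_pos one_lt_two).le)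

theorem convex_rate_constraint_set (N : ℕ) (n : Fin N) (S : Finset (Fin N))
    (g : Fin N → ℝ) (N₀ w : ℝ)
    (hg : ∀ i, 0 < g i) (hN₀ : 0 < N₀) (hw : 0 < w) :
    Convex ℝ {q : (Fin N → ℝ) × ℝ |
      Real.log ((∑ n' ∈ S, Real.exp (q.1 n') * g n' + N₀) / (Real.exp (q.1 n) * g n)) +
        Real.log ((2 : ℝ) ^ (Real.exp (q.2 / w)) - 1) ≤ 0} := by
  have Apos : ∀ u : Fin N → ℝ, 0 < ∑ i ∈ S, Real.exp (u i) * g i + N₀ := fun u =>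
    add_pos_of_nonneg_of_pos
      (Finset.sum_nonneg fun i _ => mul_nonneg (Real.exp_pos _).le (hg i).le) hN₀
  have T1 : ConvexOn ℝ Set.univ
      (fun q : (Fin N → ℝ) × ℝ => Real.log (∑ i ∈ S, Real.exp (q.1 i) * g i + N₀)) := by
    have := (convexOn_logsumexp S g hg N₀ hN₀).comp_linearMap
      (LinearMap.fst ℝ (Fin N → ℝ) ℝ)
    exact this
  have T2 : ConvexOn ℝ Set.univ
      (fun q : (Fin N → ℝ) × ℝ => -(q.1 n) - Real.log (g n)) := by
    refine ⟨convex_univ, fun a _ b _ θ σ hθ hσ hθσ => ?_⟩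
    obtain rfl : σ = 1 - θ := by linarith
    simp only [Prod.smul_fst, Prod.fst_add, Pi.add_apply, Pi.smul_apply, smul_eq_mul]
    apply le_of_eq
    ring
  have T3 : ConvexOn ℝ Set.univ
      (fun q : (Fin N → ℝ) × ℝ =>
        Real.log (Real.exp (Real.log 2 * Real.exp (w⁻¹ * q.2)) - 1)) := by
    have := convexOn_h0.comp_linearMap (w⁻¹ • LinearMap.snd ℝ (Fin N → ℝ) ℝ)
    exact this
  have Tsum := (T1.add T2).add T3
  have hfun : ∀ q : (Fin N → ℝ) × ℝ,
      Real.log ((∑ n' ∈ S, Real.exp (q.1 n') * g n' + N₀) / (Real.exp (q.1 n) * g n)) +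
        Real.log ((2 : ℝ) ^ (Real.exp (q.2 / w)) - 1) =
      Real.log (∑ i ∈ S, Real.exp (q.1 i) * g i + N₀) + (-(q.1 n) - Real.log (g n)) +
        Real.log (Real.exp (Real.log 2 * Real.exp (w⁻¹ * q.2)) - 1) := by
    intro q
    rw [Real.log_div (Apos q.1).ne' (mul_pos (Real.exp_pos _) (hg n)).ne',
      Real.log_mul (Real.exp_ne_zero _) (hg n).ne', Real.log_exp,
      Real.rpow_def_of_pos two_pos, div_eq_inv_mul]
    ring
  convert Tsum.convex_le 0 using 1
  ext q
  simp only [Set.mem_setOf_eq, Set.mem_sep_iff, Set.mem_univ, true_and, hfun q, Pi.add_apply]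
end
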